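/- arXiv:1805.08910 — 7 statements merged into one kernel-verified Lean document; each statement's English description precedes it below -/
import Mathlib

section
/- Let X, B₁, …, B_k be finite nonempty subsets of F_q. Then |B₁ + ⋯ + B_k| ≤ (|X + B₁| ⋯ |X + B_k|) / |X|^{k-1}. -/
/-!
With `U = C₁ ∪ ⋯ ∪ Cₘ`, Plünnecke's inequality for `m • U ⊇ C₁ + ⋯ + Cₘ` bounds
`#(C₁ + ⋯ + Cₘ)` by `(∑ⱼ #(Y + Cⱼ) / #Y) ^ m * #Y`. In `G ^ k`, take `Y = X ^ k` and the cyclic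
shifts `Cⱼ = ∏ᵢ B (i + j)`: then `∑ⱼ Cⱼ = (∑ᵢ Bᵢ) ^ k` and every `#(Y + Cⱼ)` equals
`∏ᵢ #(X + Bᵢ)`, which gives the theorem up to a factor `k`. Products of sets multiply all
cardinalities involved, so the tensor power trick (the same bound in `G ^ N` for every `N`)
removes that factor.
-/

open Pointwise Finset

namespace Fintype
variable {ι κ : Type*} [Fintype ι] [DecidableEq ι] {α : ι → Type*} [∀ i, AddCommMonoid (α i)]
  [∀ i, DecidableEq (α i)]

lemma piFinset_sum (s : Finset κ) (D : κ → ∀ i, Finset (α i)) :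
    piFinset (fun i ↦ ∑ j ∈ s, D j i) = ∑ j ∈ s, piFinset (D j) := by
  induction s using Finset.cons_induction with
  | empty => exact piFinset_singleton 0
  | cons a s _ ih => simp only [sum_cons, piFinset_add, ih]

end Fintype

lemma Nat.le_of_forall_pow_le_mul_pow {u v c : ℕ} (h : ∀ N, u ^ N ≤ c * v ^ N) : u ≤ v := by
  rcases v.eq_zero_or_pos with rfl | hv
  · simpa using h 1
  by_contra! hvu
  have hr : 1 < (u / v : ℚ) := by
    rw [one_lt_div (by exact_mod_cast hv)]; exact_mod_cast hvu
  obtain ⟨N, hN⟩ := pow_unbounded_of_one_lt (c : ℚ) hr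
  rw [div_pow, lt_div_iff₀ (by positivity)] at hN
  exact (h N).not_gt (by exact_mod_cast hN)

namespace Finset
variable {G : Type*} [AddCommGroup G] [DecidableEq G]

lemma card_nsmul_mul_pow_le {A : Finset G} (hA : A.Nonempty) (B : Finset G) (n : ℕ) :
    #(n • B) * #A ^ n ≤ #(A + B) ^ n * #A := by
  have h := pluennecke_ruzsa_inequality_nsmul_add hA B n
  rw [div_pow, div_mul_eq_mul_div, le_div_iff₀ (by positivity)] at h
  exact_mod_cast h

lemma card_sum_mul_pow_le_sum_card_add_pow_mul {ι : Type*} {A : Finset G} (hA : A.Nonempty)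
    (s : Finset ι) (C : ι → Finset G) :
    #(∑ j ∈ s, C j) * #A ^ #s ≤ (∑ j ∈ s, #(A + C j)) ^ #s * #A := by
  set U := s.biUnion C
  have hsum : ∑ j ∈ s, C j ⊆ #s • U := by
    rw [← sum_const, ← coe_subset, coe_sum, coe_sum]
    exact Set.finsetSum_subset_finsetSum _ _ _ fun j hj ↦ coe_subset.2 (subset_biUnion_of_mem C hj)
  have hadd : #(A + U) ≤ ∑ j ∈ s, #(A + C j) := by
    refine (card_le_card ?_).trans card_biUnion_le
    intro x hx
    obtain ⟨a, ha, u, hu, rfl⟩ := mem_add.1 hx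
    obtain ⟨j, hj, hu⟩ := mem_biUnion.1 hu
    exact mem_biUnion.2 ⟨j, hj, add_mem_add ha hu⟩
  calc #(∑ j ∈ s, C j) * #A ^ #s ≤ #(#s • U) * #A ^ #s := by gcongr
    _ ≤ #(A + U) ^ #s * #A := card_nsmul_mul_pow_le hA U #s
    _ ≤ (∑ j ∈ s, #(A + C j)) ^ #s * #A := by gcongr


lemma card_sum_mul_pow_le_mul_prod {k : ℕ} (hk : k ≠ 0) {X : Finset G} (hX : X.Nonempty)
    (B : Fin k → Finset G) :
    #(∑ i, B i) * #X ^ (k - 1) ≤ k * ∏ i, #(X + B i) := by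
  have : NeZero k := ⟨hk⟩
  set Y : Finset (Fin k → G) := Fintype.piFinset fun _ ↦ X
  set C : Fin k → Finset (Fin k → G) := fun j ↦ Fintype.piFinset fun i ↦ B (i + j)
  have hY : #Y = #X ^ k := Fintype.card_piFinset_const X k
  have hC : #(∑ j, C j) = #(∑ i, B i) ^ k := by
    rw [← Fintype.piFinset_sum, ← Fintype.card_piFinset_const]
    congr 2
    funext i
    exact Fintype.sum_equiv (Equiv.addLeft i) _ _ fun _ ↦ rfl
  have hYC (j : Fin k) : #(Y + C j) = ∏ i, #(X + B i) := by
    rw [← Fintype.piFinset_add, Fintype.card_piFinset]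
    exact Fintype.prod_equiv (Equiv.addRight j) _ _ fun _ ↦ rfl
  have h := card_sum_mul_pow_le_sum_card_add_pow_mul (A := Y)
    (Fintype.piFinset_nonempty.2 fun _ ↦ hX) univ C
  simp only [hY, hC, hYC, sum_const, card_univ, Fintype.card_fin, smul_eq_mul] at h
  have hexp : (k - 1) * k + k = k * k := by
    rw [← Nat.succ_mul, Nat.succ_eq_add_one, Nat.sub_one_add_one hk]
  have key : (#(∑ i, B i) * #X ^ (k - 1)) ^ k * #X ^ k ≤ (k * ∏ i, #(X + B i)) ^ k * #X ^ k := by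
    rwa [mul_pow, mul_assoc, ← pow_mul, ← pow_add, hexp, pow_mul]
  exact (Nat.pow_le_pow_iff_left hk).1 (Nat.le_of_mul_le_mul_right key (by positivity))

end Finset

theorem sumset_plunnecke_ruzsa_general {F : Type*} [Field F] [DecidableEq F]
    (k : ℕ) (hk : 1 ≤ k) (X : Finset F) (B : Fin k → Finset F)
    (hX : X.Nonempty) :
    (∑ i, B i).card * X.card ^ (k - 1) ≤ ∏ i, (X + B i).card := by
  refine Nat.le_of_forall_pow_le_mul_pow (c := k) fun N ↦ ?_
  have h := card_sum_mul_pow_le_mul_prod (Nat.one_le_iff_ne_zero.1 hk)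
    (Fintype.piFinset_nonempty.2 fun _ : Fin N ↦ hX) fun i ↦ Fintype.piFinset fun _ ↦ B i
  simp only [← Fintype.piFinset_sum, ← Fintype.piFinset_add, Fintype.card_piFinset_const] at h
  rwa [mul_pow, ← pow_mul, mul_comm (k - 1), pow_mul, ← prod_pow]

theorem sumset_plunnecke_ruzsa {F : Type*} [Field F] [Fintype F] [DecidableEq F]
    (k : ℕ) (hk : 1 ≤ k) (X : Finset F) (B : Fin k → Finset F)
    (hX : X.Nonempty) (hB : ∀ i, (B i).Nonempty) :
    (∑ i, B i).card * X.card ^ (k - 1) ≤ ∏ i, (X + B i).card :=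
  sumset_plunnecke_ruzsa_general k hk X B hX
end

section
/- Let X and Y be finite nonempty subsets of an abelian group, and let ε ∈ (0,1). Then there is a constant C = C(ε) and a subset X' ⊆ X with |X'| ≥ (1 - ε)|X| such that X' can be covered by at most C · |X + Y| / |Y| translates of Y. -/
open Pointwise Finset

/-!
Greedy covering. By Cauchy–Schwarz `|A|²|Y|² ≤ |A + Y| E(A, Y)`, while the additive energy
satisfies `E(A, Y) ≤ |A||Y| max_d |A ∩ (d + Y)|`; hence some translate of `Y` contains at least
`|A||Y|/|A + Y| ≥ ε|X||Y|/|X + Y|` points of any `A ⊆ X` with `|A| > ε|X|`. Removing such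
translates one at a time until at most `ε|X|` points of `X` are left uses at most
`|X + Y|/(ε|Y|)` translates, so `C = 1/ε` works.
-/

namespace Finset

variable {G : Type*} [AddCommGroup G] [DecidableEq G]

lemma addEnergy_le_mul_card_mul_card {s t : Finset G} {M : ℕ}
    (hM : ∀ a ∈ s, ∀ b ∈ t, #(s ∩ ((a - b) +ᵥ t)) ≤ M) :
    addEnergy s t ≤ M * (#s * #t) := by
  -- A quadruple `a + b = a' + b'` is determined by `(a, b')` and `a' ∈ (a - b') +ᵥ t`.
  rw [addEnergy_eq_card_filter, ← card_product]
  refine card_le_mul_card_image_of_maps_to (f := fun x ↦ (x.1.1, x.2.2)) ?_ M ?_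
  · intro x hx
    simp only [mem_filter, mem_product] at hx
    exact mem_product.2 ⟨hx.1.1.1, hx.1.2.2⟩
  · rintro ⟨a, b'⟩ hab
    rw [mem_product] at hab
    refine (card_le_card_of_injOn (fun x ↦ x.2.1) ?_ ?_).trans (hM a hab.1 b' hab.2)
    · rintro ⟨⟨a, b⟩, a', b'⟩ hx
      simp only [coe_filter, mem_filter, mem_product, Prod.mk.injEq] at hx
      obtain ⟨⟨⟨⟨-, hb⟩, ha', -⟩, hsum⟩, rfl, rfl⟩ := hx
      refine mem_inter.2 ⟨ha', mem_vadd_finset.2 ⟨b, hb, ?_⟩⟩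
      rw [vadd_eq_add, sub_add_eq_add_sub, hsum, add_sub_cancel_right]
    · intro x hx y hy (h : x.2.1 = y.2.1)
      simp only [coe_filter, mem_filter, Prod.mk.injEq] at hx hy
      have h₁₁ : x.1.1 = y.1.1 := hx.2.1.trans hy.2.1.symm
      have h₂₂ : x.2.2 = y.2.2 := hx.2.2.trans hy.2.2.symm
      have h₁₂ : x.1.2 = y.1.2 := add_left_cancel (a := x.1.1) <| by
        rw [hx.1.2, h, h₂₂, h₁₁, hy.1.2]
      exact Prod.ext (Prod.ext h₁₁ h₁₂) (Prod.ext h h₂₂)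

lemma exists_card_mul_card_le_card_add_mul_card_inter_vadd {s t : Finset G} (hs : s.Nonempty)
    (ht : t.Nonempty) : ∃ d : G, #s * #t ≤ #(s + t) * #(s ∩ (d +ᵥ t)) := by
  obtain ⟨d, -, hd⟩ := (s - t).exists_max_image (fun d ↦ #(s ∩ (d +ᵥ t))) (hs.sub ht)
  refine ⟨d, Nat.le_of_mul_le_mul_left ?_ (Nat.mul_pos hs.card_pos ht.card_pos)⟩
  calc #s * #t * (#s * #t) = #s ^ 2 * #t ^ 2 := by ring
    _ ≤ #(s + t) * addEnergy s t := le_card_add_mul_addEnergy s t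
    _ ≤ #(s + t) * (#(s ∩ (d +ᵥ t)) * (#s * #t)) :=
      Nat.mul_le_mul_left _ <| addEnergy_le_mul_card_mul_card fun a ha b hb ↦
        hd _ (sub_mem_sub ha hb)
    _ = #s * #t * (#(s + t) * #(s ∩ (d +ᵥ t))) := by ring

lemma exists_card_sdiff_add_le {Y : Finset G} (hY : Y.Nonempty) {δ : ℝ} (hδ : 0 ≤ δ)
    {N : ℕ} (A : Finset G) (hAN : #(A + Y) ≤ N) :
    ∃ T : Finset G, #(A \ (T + Y)) ≤ δ ∧ #T * (δ * #Y) ≤ #A * N := by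
  induction A using Finset.strongInduction with | H A ih =>
  by_cases hsmall : (#A : ℝ) ≤ δ
  · refine ⟨∅, by simpa using hsmall, ?_⟩
    simp only [card_empty, Nat.cast_zero, zero_mul]
    positivity
  rw [not_le] at hsmall
  have hA : A.Nonempty := card_pos.1 (by exact_mod_cast hδ.trans_lt hsmall)
  obtain ⟨t, ht⟩ := exists_card_mul_card_le_card_add_mul_card_inter_vadd hA hY
  obtain ⟨x, hx⟩ : (A ∩ (t +ᵥ Y)).Nonempty := by
    refine card_pos.1 (Nat.pos_of_ne_zero fun h ↦ ?_)
    rw [h, mul_zero] at ht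
    exact (Nat.mul_pos hA.card_pos hY.card_pos).ne' (Nat.le_zero.1 ht)
  have hA' : A \ (t +ᵥ Y) ⊂ A := (ssubset_iff_of_subset sdiff_subset).2
    ⟨x, (mem_inter.1 hx).1, fun h ↦ (mem_sdiff.1 h).2 (mem_inter.1 hx).2⟩
  obtain ⟨T, hT, hTcard⟩ :=
    ih _ hA' ((card_le_card (add_subset_add_right sdiff_subset)).trans hAN)
  have hcover : A \ (insert t T + Y) ⊆ (A \ (t +ᵥ Y)) \ (T + Y) := by
    intro y hy
    simp only [mem_sdiff] at hy ⊢
    exact ⟨⟨hy.1, fun h ↦ hy.2 (vadd_finset_subset_add (mem_insert_self t T) h)⟩,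
      fun h ↦ hy.2 (add_subset_add_right (subset_insert t T) h)⟩
  refine ⟨insert t T, le_trans (by exact_mod_cast card_le_card hcover) hT, ?_⟩
  have hstep : δ * #Y ≤ #(A ∩ (t +ᵥ Y)) * N := by
    have ht' : (#A * #Y : ℝ) ≤ #(A + Y) * #(A ∩ (t +ᵥ Y)) := by exact_mod_cast ht
    have hAN' : (#(A + Y) : ℝ) ≤ N := by exact_mod_cast hAN
    nlinarith
  have hsplit := card_sdiff_add_card_inter A (t +ᵥ Y)
  calc (#(insert t T) : ℝ) * (δ * #Y) ≤ (#T + 1) * (δ * #Y) := by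
        gcongr; exact_mod_cast card_insert_le t T
    _ ≤ #(A \ (t +ᵥ Y)) * N + #(A ∩ (t +ᵥ Y)) * N := by linarith
    _ = #A * N := by rw [← add_mul]; exact_mod_cast congrArg (· * N) hsplit

end Finset

theorem ruzsa_covering_large_subset_general (ε : ℝ) (hε0 : 0 < ε) :
    ∃ C : ℝ, 0 < C ∧
      ∀ (G : Type) [AddCommGroup G] [DecidableEq G] (X Y : Finset G),
        X.Nonempty → Y.Nonempty →
        ∃ X' ⊆ X, (1 - ε) * (X.card : ℝ) ≤ (X'.card : ℝ) ∧
          ∃ T : Finset G, X' ⊆ T + Y ∧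
            (T.card : ℝ) * (Y.card : ℝ) ≤ C * ((X + Y).card : ℝ) := by
  refine ⟨ε⁻¹, inv_pos.2 hε0, fun G _ _ X Y hX hY ↦ ?_⟩
  have hXpos : (0 : ℝ) < #X := by exact_mod_cast hX.card_pos
  obtain ⟨T, hT, hTcard⟩ := exists_card_sdiff_add_le hY (by positivity : 0 ≤ ε * #X) X le_rfl
  refine ⟨X ∩ (T + Y), inter_subset_left, ?_, T, inter_subset_right, ?_⟩
  · have hsplit : (#(X ∩ (T + Y)) : ℝ) + #(X \ (T + Y)) = #X := by
      exact_mod_cast card_inter_add_card_sdiff X (T + Y)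
    linarith
  · rw [le_inv_mul_iff₀ hε0]
    refine le_of_mul_le_mul_left ?_ hXpos
    calc (#X : ℝ) * (ε * (#T * #Y)) = #T * (ε * #X * #Y) := by ring
      _ ≤ #X * #(X + Y) := hTcard

theorem ruzsa_covering_large_subset (ε : ℝ) (hε0 : 0 < ε) (hε1 : ε < 1) :
    ∃ C : ℝ, 0 < C ∧
      ∀ (G : Type) [AddCommGroup G] [DecidableEq G] (X Y : Finset G),
        X.Nonempty → Y.Nonempty →
        ∃ X' ⊆ X, (1 - ε) * (X.card : ℝ) ≤ (X'.card : ℝ) ∧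
          ∃ T : Finset G, X' ⊆ T + Y ∧
            (T.card : ℝ) * (Y.card : ℝ) ≤ C * ((X + Y).card : ℝ) :=
  ruzsa_covering_large_subset_general ε hε0
end

section
/- Let A ⊆ F_q be finite with |A| ≥ 2, and let R be a set with A · R ⊆ R, A⁻¹ · R ⊆ R (inverses of nonzero elements of A), 1 + R ⊆ R, and 0 ∈ R. Then for any a, a' ∈ A, a·a' + R ⊆ R. -/
theorem closure_step_product_translate {F : Type*} [Field F] [Fintype F]
    (A : Finset F) (R : Set F) (hA : 2 ≤ A.card)
    (hmul : ∀ a ∈ A, ∀ r ∈ R, a * r ∈ R)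
    (hinv : ∀ a ∈ A, a ≠ 0 → ∀ r ∈ R, a⁻¹ * r ∈ R)
    (hone : ∀ r ∈ R, 1 + r ∈ R)
    (hzero : (0 : F) ∈ R) :
    ∀ a ∈ A, ∀ a' ∈ A, ∀ r ∈ R, a * a' + r ∈ R := by
  have key : ∀ a ∈ A, ∀ r ∈ R, a + r ∈ R := by
    intro a ha r hr
    by_cases h : a = 0
    · simpa [h] using hr
    · have := hmul a ha _ (hone _ (hinv a ha h r hr))
      have e : a * (1 + a⁻¹ * r) = a + r := by field_simp
      rwa [e] at this
  intro a ha a' ha' r hr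
  by_cases h : a = 0
  · simpa [h] using hr
  · have := hmul a ha _ (key a' ha' _ (hinv a ha h r hr))
    have e : a * (a' + a⁻¹ * r) = a * a' + r := by field_simp
    rwa [e] at this
end

section
/- Let A ⊆ F_q with 0, 1 ∈ A, and suppose the ratio set R(A,A) = {(a₁ - a₂)/(a₃ - a₄) : aᵢ ∈ A, a₃ ≠ a₄} satisfies 1 + R(A,A) ⊆ R(A,A), A · R(A,A) ⊆ R(A,A), and (A∖{0})⁻¹ · R(A,A) ⊆ R(A,A). Then for every polynomial F in n variables with integer coefficients, F(A, …, A) + R(A,A) ⊆ R(A,A), where F(A,…,A) = {F(a₁,…,a_n) : aᵢ ∈ A}. -/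
/-- The ratio set `R(A,A) = {(a₁-a₂)/(a₃-a₄) : aᵢ ∈ A, a₃ ≠ a₄}`. -/
def ratioSet {F : Type*} [Field F] (A : Set F) : Set F :=
  {x | ∃ a₁ ∈ A, ∃ a₂ ∈ A, ∃ a₃ ∈ A, ∃ a₄ ∈ A, a₃ ≠ a₄ ∧ x = (a₁ - a₂) / (a₃ - a₄)}

/-! Translation by `1` maps the finite set `R = R(A,A)` injectively into itself, hence onto itself,
so `R` is invariant under all integer translations. Invariance then passes from integer constants to
every polynomial value along sums and multiplications by a variable: if `x + R ⊆ R` and `a ∈ A` is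
nonzero, then `x a + R = a (x + a⁻¹ R) ⊆ R`. -/

theorem Set.Finite.neg_add_mem_of_add_mem {G : Type*} [AddGroup G] {S : Set G} (hS : S.Finite)
    {c : G} (h : ∀ x ∈ S, c + x ∈ S) : ∀ x ∈ S, -c + x ∈ S := by
  have hbij : Set.BijOn (c + ·) S S :=
    (hS.injOn_iff_bijOn_of_mapsTo h).mp (add_right_injective c).injOn
  intro x hx
  obtain ⟨y, hy, rfl⟩ := hbij.surjOn hx
  simpa using hy

theorem Set.Finite.zsmul_add_mem_of_add_mem {G : Type*} [AddGroup G] {S : Set G}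
    (hS : S.Finite) {c : G} (h : ∀ x ∈ S, c + x ∈ S) (k : ℤ) : ∀ x ∈ S, k • c + x ∈ S := by
  induction k using Int.induction_on with
  | zero => simp
  | succ k ih =>
    intro x hx
    rw [add_comm (k : ℤ), add_zsmul, one_zsmul, add_assoc]
    exact h _ (ih x hx)
  | pred k ih =>
    intro x hx
    rw [sub_eq_neg_add, add_zsmul, neg_one_zsmul, add_assoc]
    exact hS.neg_add_mem_of_add_mem h _ (ih x hx)

theorem MvPolynomial.aeval_add_mem {F σ : Type*} [Field F] {A S : Set F}
    (hint : ∀ k : ℤ, ∀ r ∈ S, (k : F) + r ∈ S)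
    (hmul : ∀ a ∈ A, ∀ r ∈ S, a * r ∈ S)
    (hinv : ∀ a ∈ A, a ≠ 0 → ∀ r ∈ S, a⁻¹ * r ∈ S)
    {a : σ → F} (ha : ∀ i, a i ∈ A) (P : MvPolynomial σ ℤ) :
    ∀ r ∈ S, MvPolynomial.aeval a P + r ∈ S := by
  induction P using MvPolynomial.induction_on with
  | C k => simpa using hint k
  | add p q ihp ihq =>
    intro r hr
    simpa [add_assoc] using ihp _ (ihq r hr)
  | mul_X p i ihp =>
    intro r hr
    by_cases hai : a i = 0
    · simpa [hai] using hr
    · have key := hmul (a i) (ha i) _ (ihp _ (hinv (a i) (ha i) hai r hr))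
      rwa [mul_add, ← mul_assoc, mul_inv_cancel₀ hai, one_mul, mul_comm,
        ← MvPolynomial.aeval_X (R := ℤ) a i, ← map_mul] at key

theorem polynomial_image_translate_ratioSet_general {F : Type*} [Field F] [Fintype F]
    (A : Set F)
    (hadd : ∀ r ∈ ratioSet A, 1 + r ∈ ratioSet A)
    (hmul : ∀ a ∈ A, ∀ r ∈ ratioSet A, a * r ∈ ratioSet A)
    (hinv : ∀ a ∈ A, a ≠ 0 → ∀ r ∈ ratioSet A, a⁻¹ * r ∈ ratioSet A) :
    ∀ (n : ℕ) (P : MvPolynomial (Fin n) ℤ) (a : Fin n → F),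
      (∀ i, a i ∈ A) → ∀ r ∈ ratioSet A, MvPolynomial.aeval a P + r ∈ ratioSet A := by
  have hint : ∀ k : ℤ, ∀ r ∈ ratioSet A, (k : F) + r ∈ ratioSet A := fun k => by
    simpa using (Set.toFinite (ratioSet A)).zsmul_add_mem_of_add_mem hadd k
  exact fun n P a ha => MvPolynomial.aeval_add_mem hint hmul hinv ha P

theorem polynomial_image_translate_ratioSet {F : Type*} [Field F] [Fintype F]
    (A : Set F) (h0 : (0 : F) ∈ A) (h1 : (1 : F) ∈ A)
    (hadd : ∀ r ∈ ratioSet A, 1 + r ∈ ratioSet A)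
    (hmul : ∀ a ∈ A, ∀ r ∈ ratioSet A, a * r ∈ ratioSet A)
    (hinv : ∀ a ∈ A, a ≠ 0 → ∀ r ∈ ratioSet A, a⁻¹ * r ∈ ratioSet A) :
    ∀ (n : ℕ) (P : MvPolynomial (Fin n) ℤ) (a : Fin n → F),
      (∀ i, a i ∈ A) → ∀ r ∈ ratioSet A, MvPolynomial.aeval a P + r ∈ ratioSet A :=
  polynomial_image_translate_ratioSet_general A hadd hmul hinv
end

section
/- Let B ⊆ F_q be a set with at least two elements, and let F_B denote the subfield of F_q generated by B. Then there exists a polynomial P(x₁, …, x_n) in n variables with integer coefficients such that P(B, …, B) = F_B, where P(B,…,B) = {P(b₁,…,b_n) : bᵢ ∈ B}. -/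
open MvPolynomial

lemma subfield_closure_eq_subring_closure {F : Type*} [Field F] [Fintype F] (B : Set F) :
    (Subfield.closure B : Set F) = (Subring.closure B : Set F) := by
  apply Set.Subset.antisymm
  · have hK : ∀ x ∈ (Subring.closure B : Set F), x⁻¹ ∈ (Subring.closure B : Set F) := by
      intro x hx
      rcases eq_or_ne x 0 with rfl | hx0
      · simpa using hx
      · have hcard : 2 ≤ Fintype.card F := Fintype.one_lt_card
        have : x⁻¹ = x ^ (Fintype.card F - 2) := by
          symm
          apply eq_inv_of_mul_eq_one_left
          rw [← pow_succ]
          have : Fintype.card F - 2 + 1 = Fintype.card F - 1 := by omega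
          rw [this]
          exact FiniteField.pow_card_sub_one_eq_one x hx0
        rw [this]
        exact pow_mem hx _
    let K : Subfield F := { Subring.closure B with inv_mem' := hK }
    have : Subfield.closure B ≤ K := Subfield.closure_le.2 Subring.subset_closure
    exact this
  · exact Subring.closure_le.2 Subfield.subset_closure

lemma mem_subring_closure_repr {F : Type*} [Field F] {B : Set F} {x : F}
    (hx : x ∈ Subring.closure B) :
    ∃ (n : ℕ) (p : MvPolynomial (Fin n) ℤ) (b : Fin n → F),
      (∀ i, b i ∈ B) ∧ MvPolynomial.aeval b p = x := by
  have hx' : x ∈ Algebra.adjoin ℤ B := by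
    rw [Algebra.adjoin_int]; exact hx
  rw [Algebra.adjoin_eq_range] at hx'
  obtain ⟨p, hp⟩ := hx'
  obtain ⟨n, f, hf, q, rfl⟩ := MvPolynomial.exists_fin_rename p
  refine ⟨n, q, fun i => (f i : F), fun i => (f i).2, ?_⟩
  rw [show ((MvPolynomial.aeval (Subtype.val : B → F)).toRingHom (MvPolynomial.rename f q) : F)
      = MvPolynomial.aeval ((Subtype.val : B → F) ∘ f) q by
    simp [MvPolynomial.aeval_rename]] at hp
  exact hp

lemma aeval_mem_subring_closure {F : Type*} [Field F] {B : Set F} {n : ℕ}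
    (p : MvPolynomial (Fin n) ℤ) (b : Fin n → F) (hb : ∀ i, b i ∈ B) :
    MvPolynomial.aeval b p ∈ Subring.closure B := by
  have h1 : MvPolynomial.aeval b p ∈ Algebra.adjoin ℤ (Set.range b) := by
    rw [Algebra.adjoin_range_eq_range_aeval]
    exact ⟨p, rfl⟩
  have h2 : Algebra.adjoin ℤ (Set.range b) ≤ Algebra.adjoin ℤ B :=
    Algebra.adjoin_mono (Set.range_subset_iff.2 hb)
  have := h2 h1
  rwa [Algebra.adjoin_int] at this

theorem polynomial_generates_subfield {F : Type*} [Field F] [Fintype F]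
    (B : Set F) (hB : B.Nontrivial) :
    ∃ (n : ℕ) (P : MvPolynomial (Fin n) ℤ),
      {x : F | ∃ b : Fin n → F, (∀ i, b i ∈ B) ∧ MvPolynomial.aeval b P = x}
        = (Subfield.closure B : Set F) := by
  classical
  obtain ⟨b₀, hb₀, b₁, hb₁, hne⟩ := hB
  have key := subfield_closure_eq_subring_closure B
  let J := {x : F // x ∈ Subring.closure B}
  have hrep : ∀ j : J, ∃ (n : ℕ) (p : MvPolynomial (Fin n) ℤ) (b : Fin n → F),
      (∀ i, b i ∈ B) ∧ MvPolynomial.aeval b p = j.1 := fun j => mem_subring_closure_repr j.2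
  choose nn pp ww hwB hwval using hrep
  haveI : Fintype J := Fintype.ofFinite J
  let T := ((j : J) × Fin (nn j)) ⊕ (J × Bool)
  let e : T ≃ Fin (Fintype.card T) := Fintype.equivFin T
  let q1 := Fintype.card F - 1
  have hq1 : q1 ≠ 0 := by
    have : 2 ≤ Fintype.card F := Fintype.one_lt_card
    simp only [q1]; omega
  let P₀ : MvPolynomial T ℤ := ∑ j : J,
    (X (Sum.inr (j, true)) - X (Sum.inr (j, false))) ^ q1
      * rename (fun i => Sum.inl ⟨j, i⟩) (pp j)
  refine ⟨Fintype.card T, rename e P₀, ?_⟩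
  ext x
  simp only [Set.mem_setOf_eq]
  constructor
  · rintro ⟨b, hbB, rfl⟩
    show _ ∈ (Subfield.closure B : Set F)
    rw [key]
    exact aeval_mem_subring_closure _ b hbB
  · intro hx
    have hx' : x ∈ Subring.closure B := by
      have : x ∈ (Subfield.closure B : Set F) := hx
      rw [key] at this; exact this
    set j₀ : J := ⟨x, hx'⟩ with hj₀
    let c : T → F := Sum.elim (fun ji => ww ji.1 ji.2)
      (fun js => if js.1 = j₀ ∧ js.2 = false then b₁ else b₀)
    refine ⟨fun i => c (e.symm i), fun i => ?_, ?_⟩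
    · rcases h : e.symm i with ⟨j, k⟩ | ⟨j, s⟩
      · simpa [c, h] using hwB j k
      · simp only [c, h, Sum.elim_inr]
        split_ifs <;> assumption
    · rw [MvPolynomial.aeval_rename]
      have hce : (fun i => c (e.symm i)) ∘ e = c := by
        funext t; simp
      rw [hce]
      have expand : MvPolynomial.aeval c P₀ = ∑ j : J,
          (c (Sum.inr (j, true)) - c (Sum.inr (j, false))) ^ q1
            * MvPolynomial.aeval (fun i => c (Sum.inl ⟨j, i⟩)) (pp j) := by
        simp [P₀, MvPolynomial.aeval_rename, Function.comp_def]
      rw [expand]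
      rw [Finset.sum_eq_single j₀]
      · have h1 : c (Sum.inr (j₀, true)) = b₀ := by simp [c]
        have h2 : c (Sum.inr (j₀, false)) = b₁ := by simp [c]
        have h3 : (fun i => c (Sum.inl ⟨j₀, i⟩)) = ww j₀ := by funext i; simp [c]
        rw [h1, h2, h3, hwval j₀]
        rw [FiniteField.pow_card_sub_one_eq_one _ (sub_ne_zero.2 hne), one_mul]
      · intro j _ hj
        have h1 : c (Sum.inr (j, true)) = b₀ := by simp [c]
        have h2 : c (Sum.inr (j, false)) = b₀ := by simp [c, hj]
        rw [h1, h2, sub_self, zero_pow hq1, zero_mul]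
      · intro h; exact absurd (Finset.mem_univ j₀) h
end

section
/- Let X, Y ⊆ F_q be finite nonempty sets and let R(X,Y) = {(b₁ - b₂)/(a₁ - a₂) : a₁, a₂ ∈ X, a₁ ≠ a₂, b₁, b₂ ∈ Y} ∪ {0}. Then ∑_{r ∈ R(X,Y)} E⁺(rX, Y) ≤ |R(X,Y)| |X| |Y| + |X|² |Y|², where E⁺(U, V) is the number of quadruples (u₁, u₂, v₁, v₂) ∈ U² × V² with u₁ + v₁ = u₂ + v₂. -/
/-!
Split the solutions of `r a₁ + b₁ = r a₂ + b₂` according to whether `a₁ = a₂`. The diagonal ones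
number at most `|X| |Y|` for each `r`. An off-diagonal one determines `r = (b₂ - b₁) / (a₁ - a₂)`,
so as `r` varies the off-diagonal solutions form disjoint subsets of `X² × Y²`.
-/

open Pointwise Finset

/-- The additive energy `E⁺(U,V)`: the number of quadruples
`(u₁, u₂, v₁, v₂) ∈ U² × V²` with `u₁ + v₁ = u₂ + v₂`. -/
def energyPlus {F : Type*} [DecidableEq F] [Field F] (U V : Finset F) : ℕ :=
  (((U ×ˢ U) ×ˢ V ×ˢ V).filter (fun p => p.1.1 + p.2.1 = p.1.2 + p.2.2)).card

section

variable {F : Type*} [Field F] [DecidableEq F]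

def energySolutions (U V : Finset F) : Finset ((F × F) × F × F) :=
  ((U ×ˢ U) ×ˢ V ×ˢ V).filter fun p => p.1.1 + p.2.1 = p.1.2 + p.2.2

def ratioSolutions (X Y : Finset F) (r : F) : Finset ((F × F) × F × F) :=
  ((X ×ˢ X) ×ˢ Y ×ˢ Y).filter fun q => q.1.1 ≠ q.1.2 ∧ r * (q.1.1 - q.1.2) = q.2.2 - q.2.1

lemma energyPlus_eq_card_energySolutions (U V : Finset F) :
    energyPlus U V = #(energySolutions U V) := rfl

lemma card_filter_energySolutions_eq_le (U V : Finset F) :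
    #((energySolutions U V).filter fun p => p.1.1 = p.1.2) ≤ #U * #V := by
  have hsub : ((energySolutions U V).filter fun p => p.1.1 = p.1.2) ⊆
      (U ×ˢ V).image fun x => ((x.1, x.1), (x.2, x.2)) := by
    rintro ⟨⟨u₁, u₂⟩, v₁, v₂⟩ hp
    simp only [energySolutions, mem_filter, mem_product] at hp
    obtain ⟨⟨⟨⟨hu₁, -⟩, hv₁, -⟩, hsum⟩, rfl⟩ := hp
    obtain rfl : v₁ = v₂ := add_left_cancel hsum
    exact mem_image.2 ⟨(u₁, v₁), mem_product.2 ⟨hu₁, hv₁⟩, rfl⟩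
  calc _ ≤ #((U ×ˢ V).image fun x => ((x.1, x.1), (x.2, x.2))) := card_le_card hsub
    _ ≤ #(U ×ˢ V) := card_image_le
    _ = #U * #V := card_product U V

lemma card_filter_energySolutions_image_mul_ne_le (X Y : Finset F) (r : F) :
    #((energySolutions (X.image (r * ·)) Y).filter fun p => p.1.1 ≠ p.1.2) ≤
      #(ratioSolutions X Y r) := by
  have hsub : ((energySolutions (X.image (r * ·)) Y).filter fun p => p.1.1 ≠ p.1.2) ⊆
      (ratioSolutions X Y r).image fun q => ((r * q.1.1, r * q.1.2), q.2) := by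
    rintro ⟨⟨u₁, u₂⟩, v₁, v₂⟩ hp
    simp only [energySolutions, mem_filter, mem_product, mem_image] at hp
    obtain ⟨⟨⟨⟨⟨a₁, ha₁, rfl⟩, ⟨a₂, ha₂, rfl⟩⟩, hv₁, hv₂⟩, hsum⟩, hne⟩ := hp
    refine mem_image.2 ⟨((a₁, a₂), (v₁, v₂)), ?_, rfl⟩
    simp only [ratioSolutions, mem_filter, mem_product]
    refine ⟨⟨⟨ha₁, ha₂⟩, hv₁, hv₂⟩, fun h => hne (by rw [h]), by linear_combination hsum⟩
  exact (card_le_card hsub).trans card_image_le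

lemma energyPlus_image_mul_le (X Y : Finset F) (r : F) :
    energyPlus (X.image (r * ·)) Y ≤ #X * #Y + #(ratioSolutions X Y r) := by
  rw [energyPlus_eq_card_energySolutions,
    ← card_filter_add_card_filter_not (fun p : (F × F) × F × F => p.1.1 = p.1.2)]
  exact Nat.add_le_add
    ((card_filter_energySolutions_eq_le _ Y).trans (Nat.mul_le_mul_right _ card_image_le))
    (card_filter_energySolutions_image_mul_ne_le X Y r)

lemma pairwiseDisjoint_ratioSolutions (X Y : Finset F) (R : Set F) :
    R.PairwiseDisjoint (ratioSolutions X Y) := by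
  intro r _ s _ hrs
  refine disjoint_left.2 fun q hr hs => hrs ?_
  simp only [ratioSolutions, mem_filter] at hr hs
  exact mul_right_cancel₀ (sub_ne_zero.2 hr.2.1) (hr.2.2.trans hs.2.2.symm)

lemma sum_card_ratioSolutions_le (X Y R : Finset F) :
    ∑ r ∈ R, #(ratioSolutions X Y r) ≤ #X ^ 2 * #Y ^ 2 := by
  rw [← card_biUnion (pairwiseDisjoint_ratioSolutions X Y R)]
  calc _ ≤ #((X ×ˢ X) ×ˢ Y ×ˢ Y) :=
        card_le_card (biUnion_subset.2 fun _ _ => filter_subset _ _)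
    _ = #X ^ 2 * #Y ^ 2 := by simp only [card_product]; ring

end

theorem sum_energy_over_ratio_set_general {F : Type*} [Field F] [DecidableEq F]
    (X Y R : Finset F) :
    ∑ r ∈ R, energyPlus (X.image (fun x => r * x)) Y
      ≤ R.card * X.card * Y.card + X.card ^ 2 * Y.card ^ 2 :=
  calc ∑ r ∈ R, energyPlus (X.image (fun x => r * x)) Y
      ≤ ∑ r ∈ R, (#X * #Y + #(ratioSolutions X Y r)) :=
        sum_le_sum fun r _ => energyPlus_image_mul_le X Y r
    _ = #R * (#X * #Y) + ∑ r ∈ R, #(ratioSolutions X Y r) := by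
        rw [sum_add_distrib, sum_const, smul_eq_mul]
    _ ≤ #R * #X * #Y + #X ^ 2 * #Y ^ 2 := by
        rw [← mul_assoc]; gcongr; exact sum_card_ratioSolutions_le X Y R

theorem sum_energy_over_ratio_set {F : Type*} [Field F] [Fintype F] [DecidableEq F]
    (X Y R : Finset F) (hX : X.Nonempty) (hY : Y.Nonempty)
    (hR : ∀ x : F, x ∈ R ↔ (x = 0 ∨ ∃ a₁ ∈ X, ∃ a₂ ∈ X, ∃ b₁ ∈ Y, ∃ b₂ ∈ Y,
      a₁ ≠ a₂ ∧ x = (b₁ - b₂) / (a₁ - a₂))) :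
    ∑ r ∈ R, energyPlus (X.image (fun x => r * x)) Y
      ≤ R.card * X.card * Y.card + X.card ^ 2 * Y.card ^ 2 :=
  sum_energy_over_ratio_set_general X Y R
end

section
/- Let A ⊆ F_q be finite and nonempty, set B := A + A, and suppose E(A², (A-B)²) ≤ |A|^{3-ε} |B|² for some ε > 0, where E(A², (A-B)²) is the number of 6-tuples (a₁, a₂, b₁, a₃, a₄, b₂) ∈ (A × A × B)² with a₁² + (a₂ - b₁)² = a₃² + (a₄ - b₂)². Then max{|A + A|, |A² + A²|} ≫ |A|^{1 + ε/3}, i.e. |A+A|² · |A²+A²| ≥ |A|^{3+ε}. -/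
open Pointwise Finset

/-- `E(A², (A-B)²)`: the number of 6-tuples `(a₁, a₂, b₁, a₃, a₄, b₂) ∈ (A × A × B)²`
with `a₁² + (a₂ - b₁)² = a₃² + (a₄ - b₂)²`. -/
def energyDist {F : Type*} [DecidableEq F] [Field F] (A B : Finset F) : ℕ :=
  (((A ×ˢ A ×ˢ B) ×ˢ A ×ˢ A ×ˢ B).filter (fun p =>
    p.1.1 ^ 2 + (p.1.2.1 - p.1.2.2) ^ 2 = p.2.1 ^ 2 + (p.2.2.1 - p.2.2.2) ^ 2)).card

/-!
Every triple `(a, a', a'') ∈ A³` yields the point `(a, a', a' + a'') ∈ A × A × (A + A)` at which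
`x² + (y - z)²` takes the value `a² + a''² ∈ A² + A²`. So `|A|³` points of `A × A × (A + A)` are
mapped into `A² + A²`. Since `E(A², (A - B)²)` counts the pairs of points of `A × A × (A + A)`
with equal value, Cauchy–Schwarz over the fibres gives
`|A|⁶ ≤ |A² + A²| · E(A², (A - B)²) ≤ |A² + A²| · |A|^{3-ε} |A + A|²`.
-/

section Fibres

variable {α β : Type*} [DecidableEq β]

lemma card_filter_eq_on_product_eq_sum_sq (P : Finset α) (f : α → β) :
    #{q ∈ P ×ˢ P | f q.1 = f q.2} = ∑ x ∈ P.image f, #{p ∈ P | f p = x} ^ 2 := by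
  rw [card_eq_sum_card_fiberwise (f := fun q => f q.1) (t := P.image f)]
  · refine sum_congr rfl fun x _ => ?_
    rw [sq, ← card_product]
    congr 1
    ext q
    simp only [mem_filter, mem_product]
    grind
  · intro q hq
    simp only [coe_filter, mem_product, Set.mem_ofPred_eq] at hq
    exact mem_image_of_mem f hq.1.1

lemma card_sq_le_card_mul_card_filter_eq_on_product (P : Finset α) (f : α → β) (T : Finset β) :
    #{p ∈ P | f p ∈ T} ^ 2 ≤ #T * #{q ∈ P ×ˢ P | f q.1 = f q.2} := by
  calc
    _ = (∑ x ∈ T, #{p ∈ P | f p = x}) ^ 2 := by rw [sum_card_fiberwise_eq_card_filter]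
    _ ≤ #T * ∑ x ∈ T, #{p ∈ P | f p = x} ^ 2 := sq_sum_le_card_mul_sum_sq
    _ ≤ #T * ∑ x ∈ P.image f, #{p ∈ P | f p = x} ^ 2 := by
        refine Nat.mul_le_mul_left _ (sum_le_sum_of_ne_zero fun x _ hx => ?_)
        obtain ⟨p, hp⟩ := card_pos.1 (pos_of_ne_zero (pow_ne_zero_iff two_ne_zero |>.1 hx))
        rw [mem_filter] at hp
        exact hp.2 ▸ mem_image_of_mem f hp.1
    _ = #T * #{q ∈ P ×ˢ P | f q.1 = f q.2} := by rw [card_filter_eq_on_product_eq_sum_sq]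

end Fibres

lemma card_pow_three_le_card_filter_sq_add_sq_mem {R : Type*} [CommRing R] [DecidableEq R]
    (A : Finset R) :
    #A ^ 3 ≤ #{p ∈ A ×ˢ A ×ˢ (A + A) | p.1 ^ 2 + (p.2.1 - p.2.2) ^ 2 ∈
      A.image (· ^ 2) + A.image (· ^ 2)} := by
  rw [show #A ^ 3 = #(A ×ˢ A ×ˢ A) by simp only [card_product]; ring]
  refine card_le_card_of_injOn (fun p => (p.1, p.2.1, p.2.1 + p.2.2)) ?_ ?_
  · rintro ⟨a, a', a''⟩ hp
    simp only [coe_product, Set.mem_prod, mem_coe] at hp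
    simp only [coe_filter, mem_product, Set.mem_ofPred_eq, sub_add_cancel_left, neg_sq]
    exact ⟨⟨hp.1, hp.2.1, add_mem_add hp.2.1 hp.2.2⟩,
      add_mem_add (mem_image_of_mem _ hp.1) (mem_image_of_mem _ hp.2.2)⟩
  · rintro ⟨a, a', a''⟩ - ⟨b, b', b''⟩ - h
    simp only [Prod.mk.injEq] at h
    obtain ⟨rfl, rfl, h⟩ := h
    rw [add_left_cancel h]

theorem small_energy_implies_sum_product_general {F : Type*} [Field F] [DecidableEq F]
    (A : Finset F) (hA : A.Nonempty) (ε : ℝ)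
    (hE : (energyDist A (A + A) : ℝ)
      ≤ (A.card : ℝ) ^ ((3 : ℝ) - ε) * ((A + A).card : ℝ) ^ 2) :
    (A.card : ℝ) ^ ((3 : ℝ) + ε)
      ≤ ((A + A).card : ℝ) ^ 2
        * ((A.image (fun x => x ^ 2) + A.image (fun x => x ^ 2)).card : ℝ) := by
  set S := A.image (fun x => x ^ 2) + A.image (fun x => x ^ 2)
  have hApos : (0 : ℝ) < #A := by exact_mod_cast hA.card_pos
  have hCS : ((#A : ℝ) ^ 3) ^ 2 ≤ #S * energyDist A (A + A) := by
    exact_mod_cast (Nat.pow_le_pow_left (card_pow_three_le_card_filter_sq_add_sq_mem A) 2).trans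
      (card_sq_le_card_mul_card_filter_eq_on_product _ _ S)
  refine le_of_mul_le_mul_right ?_ (Real.rpow_pos_of_pos hApos (3 - ε))
  calc (#A : ℝ) ^ ((3 : ℝ) + ε) * (#A : ℝ) ^ ((3 : ℝ) - ε)
      = ((#A : ℝ) ^ 3) ^ 2 := by
        rw [← Real.rpow_add hApos, ← pow_mul, ← Real.rpow_natCast]
        norm_num
    _ ≤ #S * energyDist A (A + A) := hCS
    _ ≤ #S * ((#A : ℝ) ^ ((3 : ℝ) - ε) * (#(A + A) : ℝ) ^ 2) := by gcongr
    _ = (#(A + A) : ℝ) ^ 2 * #S * (#A : ℝ) ^ ((3 : ℝ) - ε) := by ring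

theorem small_energy_implies_sum_product {F : Type*} [Field F] [Fintype F] [DecidableEq F]
    (A : Finset F) (hA : A.Nonempty) (ε : ℝ) (hε : 0 < ε)
    (hE : (energyDist A (A + A) : ℝ)
      ≤ (A.card : ℝ) ^ ((3 : ℝ) - ε) * ((A + A).card : ℝ) ^ 2) :
    (A.card : ℝ) ^ ((3 : ℝ) + ε)
      ≤ ((A + A).card : ℝ) ^ 2
        * ((A.image (fun x => x ^ 2) + A.image (fun x => x ^ 2)).card : ℝ) :=
  small_energy_implies_sum_product_general A hA ε hE
end
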